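/- Let T be an infinite rooted tree, ψ : T → ℂ, m ≠ n natural numbers, and suppose M_ψ : L^(m) → L^(n) is bounded. If lim_{|v|→∞} |ψ'(v)|ℓ_m(|v|)Λ_n(|v|) = 0 and lim_{|v|→∞} |ψ(v⁻)|Λ_n(|v|)/Λ_m(|v|) = 0, then for every sequence (f_k) bounded in L^(m)-norm converging to 0 pointwise on T, ‖ψ f_k‖_n → 0. -/

import Mathlib

open Real Filter

/-- Iterated logarithm: ℓ₀(x) = x, ℓ_{j+1}(x) = 1 + log ℓ_j(x). -/
noncomputable def ell : ℕ → ℝ → ℝ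
  | 0, x => x
  | j + 1, x => 1 + Real.log (ell j x)

/-- Λ_k(x) = ∏_{j=0}^{k-1} ℓ_j(x). -/
noncomputable def Lam (k : ℕ) (x : ℝ) : ℝ := ∏ j ∈ Finset.range k, ell j x

/-- Discrete derivative of f on a rooted tree given by a parent map:
`f v - f (parent v)` (automatically 0 at the root since `parent o = o`). -/
def Der {V : Type*} (parent : V → V) (f : V → ℂ) (v : V) : ℂ := f v - f (parent v)

/-- The set of values |f'(v)|·Λ_k(|v|) over v ≠ o; f ∈ L^(k) iff this set is bounded above. -/
def lipSet {V : Type*} (o : V) (parent : V → V) (depth : V → ℕ) (k : ℕ) (f : V → ℂ) : Set ℝ :=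
  {r | ∃ v, v ≠ o ∧ r = ‖Der parent f v‖ * Lam k (depth v)}

/-- ‖f‖_k = |f(o)| + sup_{v ≠ o} |f'(v)|·Λ_k(|v|). -/
noncomputable def lipNorm {V : Type*} (o : V) (parent : V → V) (depth : V → ℕ) (k : ℕ)
    (f : V → ℂ) : ℝ :=
  ‖f o‖ + sSup (lipSet o parent depth k f)

open Topology

/-!
Since `ℓ_m' = 1 / Λ_m`, the mean value theorem gives `∑_{j=1}^N 1 / Λ_m(j) ≤ ℓ_m(N)`; summing the
derivative of `f` along the path from the root then yields the point evaluation bound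
`|f(v)| ≤ ℓ_m(|v|) ‖f‖_m`. With the Leibniz rule `(ψ f)' = ψ' f + ψ(v⁻) f'`, this bounds
`|(ψ f)'(v)| Λ_n(|v|)` by `(|ψ'(v)| ℓ_m Λ_n + |ψ(v⁻)| Λ_n / Λ_m)(|v|) ‖f‖_m`, which is small far
from the root uniformly along a norm-bounded sequence. The finitely many vertices near the root
are handled by pointwise convergence.
-/

lemma one_le_ell (j : ℕ) {x : ℝ} (hx : 1 ≤ x) : 1 ≤ ell j x := by
  induction j with
  | zero => exact hx
  | succ j ih => exact le_add_of_nonneg_right (Real.log_nonneg ih)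

lemma ell_one (j : ℕ) : ell j 1 = 1 := by
  induction j with
  | zero => rfl
  | succ j ih => simp [ell, ih]

lemma monotoneOn_ell (j : ℕ) : MonotoneOn (ell j) (Set.Ici 1) := by
  induction j with
  | zero => exact monotone_id.monotoneOn _
  | succ j ih =>
    intro x hx y hy hxy
    exact add_le_add_right
      (Real.log_le_log (zero_lt_one.trans_le (one_le_ell j hx)) (ih hx hy hxy)) 1

lemma Lam_succ (j : ℕ) (x : ℝ) : Lam (j + 1) x = Lam j x * ell j x :=
  Finset.prod_range_succ _ _

lemma Lam_one (k : ℕ) : Lam k 1 = 1 := by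
  simp [Lam, ell_one]

lemma one_le_Lam (k : ℕ) {x : ℝ} (hx : 1 ≤ x) : 1 ≤ Lam k x :=
  Finset.one_le_prod fun j _ => one_le_ell j hx

lemma Lam_pos (k : ℕ) {x : ℝ} (hx : 1 ≤ x) : 0 < Lam k x :=
  zero_lt_one.trans_le (one_le_Lam k hx)

lemma monotoneOn_Lam (k : ℕ) : MonotoneOn (Lam k) (Set.Ici 1) := fun _ hx _ hy hxy =>
  Finset.prod_le_prod (fun j _ => zero_le_one.trans (one_le_ell j hx))
    fun j _ => monotoneOn_ell j hx hy hxy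

lemma hasDerivAt_ell (j : ℕ) {x : ℝ} (hx : 1 ≤ x) : HasDerivAt (ell j) (Lam j x)⁻¹ x := by
  induction j with
  | zero =>
    rw [show (Lam 0 x)⁻¹ = 1 by simp [Lam]]
    exact hasDerivAt_id' x
  | succ j ih =>
    have hlog := (Real.hasDerivAt_log (zero_lt_one.trans_le (one_le_ell j hx)).ne').comp x ih
    rw [Lam_succ, mul_inv, mul_comm]
    exact hlog.const_add 1

lemma inv_Lam_le_ell_sub (m : ℕ) {x : ℝ} (hx : 1 ≤ x) :
    (Lam m (x + 1))⁻¹ ≤ ell m (x + 1) - ell m x := by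
  obtain ⟨c, ⟨hxc, hcx⟩, hc⟩ := exists_hasDerivAt_eq_slope (ell m) (fun y => (Lam m y)⁻¹)
    (lt_add_one x) (fun y hy => (hasDerivAt_ell m (hx.trans hy.1)).continuousAt.continuousWithinAt)
    (fun y hy => hasDerivAt_ell m (hx.trans hy.1.le))
  have hc1 : 1 ≤ c := hx.trans hxc.le
  rw [add_sub_cancel_left, div_one] at hc
  rw [← hc]
  exact inv_anti₀ (Lam_pos m hc1) (monotoneOn_Lam m hc1 (by simp; linarith) hcx.le)

lemma sum_inv_Lam_le_ell (m : ℕ) {N : ℕ} (hN : 1 ≤ N) :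
    ∑ j ∈ Finset.Icc 1 N, (Lam m j)⁻¹ ≤ ell m N := by
  induction N, hN using Nat.le_induction with
  | base => simp [Lam_one, ell_one]
  | succ N hN ih =>
    rw [Finset.sum_Icc_succ_top (by omega)]
    have := inv_Lam_le_ell_sub m (Nat.one_le_cast.mpr hN)
    push_cast
    linarith

lemma sum_inv_Lam_nonneg (m N : ℕ) : 0 ≤ ∑ j ∈ Finset.Icc 1 N, (Lam m j)⁻¹ :=
  Finset.sum_nonneg fun _ hj =>
    inv_nonneg.mpr (Lam_pos m (Nat.one_le_cast.mpr (Finset.mem_Icc.mp hj).1)).le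

lemma Der_mul {V : Type*} (parent : V → V) (ψ f : V → ℂ) (v : V) :
    Der parent (fun w => ψ w * f w) v = Der parent ψ v * f v + ψ (parent v) * Der parent f v := by
  simp only [Der]
  ring

section RootedTree

variable {V : Type*} {o : V} {parent : V → V} {depth : V → ℕ}

lemma one_le_depth (hdepth : ∀ v, v ≠ o → depth v = depth (parent v) + 1) {v : V}
    (hv : v ≠ o) : (1 : ℝ) ≤ depth v := by
  rw [hdepth v hv]
  exact_mod_cast Nat.le_add_left 1 _

variable (hdepth : ∀ v, v ≠ o → depth v = depth (parent v) + 1)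
include hdepth

lemma sSup_lipSet_nonneg (k : ℕ) (f : V → ℂ) : 0 ≤ sSup (lipSet o parent depth k f) :=
  Real.sSup_nonneg fun _ ⟨_, hv, hr⟩ =>
    hr ▸ mul_nonneg (norm_nonneg _) (Lam_pos k (one_le_depth hdepth hv)).le

lemma lipNorm_nonneg (k : ℕ) (f : V → ℂ) : 0 ≤ lipNorm o parent depth k f :=
  add_nonneg (norm_nonneg _) (sSup_lipSet_nonneg hdepth k f)

lemma norm_le_add_sSup_mul_sum {m : ℕ} {f : V → ℂ} (hf : BddAbove (lipSet o parent depth m f))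
    (v : V) : ‖f v‖ ≤
      ‖f o‖ + sSup (lipSet o parent depth m f) * ∑ j ∈ Finset.Icc 1 (depth v), (Lam m j)⁻¹ := by
  have hS := sSup_lipSet_nonneg hdepth m f
  induction hN : depth v generalizing v with
  | zero =>
    obtain rfl : v = o := by
      by_contra hv
      have := hdepth v hv
      omega
    simp
  | succ N ih =>
    by_cases hv : v = o
    · subst hv
      nlinarith [sum_inv_Lam_nonneg m (N + 1)]
    have hparent : depth (parent v) = N := by
      have := hdepth v hv
      omega
    have hder : ‖Der parent f v‖ ≤ sSup (lipSet o parent depth m f) * (Lam m ↑(N + 1))⁻¹ := by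
      rw [← div_eq_mul_inv, le_div_iff₀ (Lam_pos m (by simp)), ← hN]
      exact le_csSup hf ⟨v, hv, rfl⟩
    rw [Finset.sum_Icc_succ_top (by omega), mul_add]
    have htriangle : ‖f v‖ ≤ ‖f (parent v)‖ + ‖Der parent f v‖ := norm_le_insert' _ _
    linarith [ih (parent v) hparent]

lemma norm_le_ell_mul_lipNorm {m : ℕ} {f : V → ℂ} (hf : BddAbove (lipSet o parent depth m f))
    {v : V} (hv : v ≠ o) : ‖f v‖ ≤ ell m (depth v) * lipNorm o parent depth m f := by
  have hdepth_v : 1 ≤ depth v := Nat.one_le_cast.mp (one_le_depth hdepth hv)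
  have hell := one_le_ell m (one_le_depth hdepth hv)
  calc ‖f v‖
      ≤ ‖f o‖ + sSup (lipSet o parent depth m f) * ∑ j ∈ Finset.Icc 1 (depth v), (Lam m j)⁻¹ :=
        norm_le_add_sSup_mul_sum hdepth hf v
    _ ≤ ‖f o‖ + sSup (lipSet o parent depth m f) * ell m (depth v) := by
        gcongr
        · exact sSup_lipSet_nonneg hdepth m f
        · exact sum_inv_Lam_le_ell m hdepth_v
    _ ≤ ell m (depth v) * lipNorm o parent depth m f := by
        unfold lipNorm
        nlinarith [norm_nonneg (f o)]

lemma norm_Der_mul_mul_Lam_le {ψ f : V → ℂ} {m : ℕ} (n : ℕ)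
    (hf : BddAbove (lipSet o parent depth m f)) {v : V} (hv : v ≠ o) :
    ‖Der parent (fun w => ψ w * f w) v‖ * Lam n (depth v) ≤
      (‖Der parent ψ v‖ * ell m (depth v) * Lam n (depth v) +
        ‖ψ (parent v)‖ * Lam n (depth v) / Lam m (depth v)) * lipNorm o parent depth m f := by
  have hLm := Lam_pos m (one_le_depth hdepth hv)
  have hLn := (Lam_pos n (one_le_depth hdepth hv)).le
  have hfv := norm_le_ell_mul_lipNorm hdepth hf hv
  have hDf : ‖Der parent f v‖ * Lam m (depth v) ≤ lipNorm o parent depth m f :=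
    (le_csSup hf ⟨v, hv, rfl⟩).trans (le_add_of_nonneg_left (norm_nonneg _))
  have hleibniz : ‖Der parent (fun w => ψ w * f w) v‖ ≤
      ‖Der parent ψ v‖ * ‖f v‖ + ‖ψ (parent v)‖ * ‖Der parent f v‖ := by
    rw [Der_mul, ← norm_mul, ← norm_mul]
    exact norm_add_le _ _
  calc ‖Der parent (fun w => ψ w * f w) v‖ * Lam n (depth v)
      ≤ (‖Der parent ψ v‖ * ‖f v‖ + ‖ψ (parent v)‖ * ‖Der parent f v‖) * Lam n (depth v) := by
        gcongr
    _ = ‖Der parent ψ v‖ * Lam n (depth v) * ‖f v‖ +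
          ‖ψ (parent v)‖ * Lam n (depth v) / Lam m (depth v) *
            (‖Der parent f v‖ * Lam m (depth v)) := by
        field_simp
    _ ≤ ‖Der parent ψ v‖ * Lam n (depth v) * (ell m (depth v) * lipNorm o parent depth m f) +
          ‖ψ (parent v)‖ * Lam n (depth v) / Lam m (depth v) * lipNorm o parent depth m f := by
        gcongr
    _ = _ := by ring

lemma exists_depth_Der_mul_mul_Lam_le {ψ : V → ℂ} {m n : ℕ}
    (hμ : ∀ ε > (0 : ℝ), ∃ M : ℕ, ∀ v, v ≠ o → M ≤ depth v →
      ‖Der parent ψ v‖ * ell m (depth v) * Lam n (depth v) < ε)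
    (hν : ∀ ε > (0 : ℝ), ∃ M : ℕ, ∀ v, v ≠ o → M ≤ depth v →
      ‖ψ (parent v)‖ * Lam n (depth v) / Lam m (depth v) < ε)
    {f : ℕ → V → ℂ} (hf : ∀ k, BddAbove (lipSet o parent depth m (f k)))
    {B : ℝ} (hB : ∀ k, lipNorm o parent depth m (f k) ≤ B) {ε : ℝ} (hε : 0 < ε) :
    ∃ M : ℕ, ∀ k v, v ≠ o → M ≤ depth v →
      ‖Der parent (fun w => ψ w * f k w) v‖ * Lam n (depth v) ≤ ε := by
  have hB0 : 0 ≤ B := (lipNorm_nonneg hdepth m (f 0)).trans (hB 0)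
  obtain ⟨δ, hδ, hδB⟩ : ∃ δ > 0, (δ + δ) * B ≤ ε :=
    ⟨ε / (2 * (B + 1)), by positivity, by field_simp; nlinarith⟩
  obtain ⟨M₁, hM₁⟩ := hμ δ hδ
  obtain ⟨M₂, hM₂⟩ := hν δ hδ
  refine ⟨max M₁ M₂, fun k v hv hM => ?_⟩
  have hd := one_le_depth hdepth hv
  have hell := zero_le_one.trans (one_le_ell m hd)
  have hLm := Lam_pos m hd
  have hLn := Lam_pos n hd
  calc ‖Der parent (fun w => ψ w * f k w) v‖ * Lam n (depth v)
      ≤ (‖Der parent ψ v‖ * ell m (depth v) * Lam n (depth v) +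
          ‖ψ (parent v)‖ * Lam n (depth v) / Lam m (depth v)) * lipNorm o parent depth m (f k) :=
        norm_Der_mul_mul_Lam_le hdepth n (hf k) hv
    _ ≤ (δ + δ) * B := by
        gcongr
        · exact lipNorm_nonneg hdepth m (f k)
        · exact (hM₁ v hv (le_of_max_le_left hM)).le
        · exact (hM₂ v hv (le_of_max_le_right hM)).le
        · exact hB k
    _ ≤ ε := hδB

lemma tendsto_lipNorm_of_tendsto_of_uniform_tail (hlocfin : ∀ M : ℕ, {v : V | depth v ≤ M}.Finite)
    {n : ℕ} {g : ℕ → V → ℂ} (hg : ∀ v, Tendsto (fun k => g k v) atTop (𝓝 0))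
    (htail : ∀ ε > (0 : ℝ), ∃ M : ℕ, ∀ k v, v ≠ o → M ≤ depth v →
      ‖Der parent (g k) v‖ * Lam n (depth v) ≤ ε) :
    Tendsto (fun k => lipNorm o parent depth n (g k)) atTop (𝓝 0) := by
  have hroot : Tendsto (fun k => ‖g k o‖) atTop (𝓝 0) := by simpa using (hg o).norm
  have hnear (v : V) : Tendsto (fun k => ‖Der parent (g k) v‖ * Lam n (depth v)) atTop (𝓝 0) := by
    simpa [Der] using ((hg v).sub (hg (parent v))).norm.mul_const (Lam n (depth v))
  have hsup : Tendsto (fun k => sSup (lipSet o parent depth n (g k))) atTop (𝓝 0) := by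
    refine tendsto_order.2 ⟨fun a ha => Eventually.of_forall fun k =>
      ha.trans_le (sSup_lipSet_nonneg hdepth n (g k)), fun a ha => ?_⟩
    obtain ⟨M, hM⟩ := htail (a / 2) (half_pos ha)
    filter_upwards [(eventually_all_finite (hlocfin M)).mpr fun v _ =>
      (hnear v).eventually_lt_const (half_pos ha)] with k hk
    refine (Real.sSup_le ?_ (half_pos ha).le).trans_lt (half_lt_self ha)
    rintro _ ⟨v, hv, rfl⟩
    rcases le_total (depth v) M with h | h
    · exact (hk v h).le
    · exact hM k v hv h
  unfold lipNorm
  simpa using hroot.add hsup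

end RootedTree

theorem compact_sufficient_general {V : Type*} (o : V) (parent : V → V) (depth : V → ℕ)
    (hdepth : ∀ v, v ≠ o → depth v = depth (parent v) + 1)
    (hlocfin : ∀ M : ℕ, {v : V | depth v ≤ M}.Finite)
    (ψ : V → ℂ) (m n : ℕ)
    (hμ : ∀ ε > (0 : ℝ), ∃ M : ℕ, ∀ v, v ≠ o → M ≤ depth v →
      ‖Der parent ψ v‖ * ell m (depth v) * Lam n (depth v) < ε)
    (hν : ∀ ε > (0 : ℝ), ∃ M : ℕ, ∀ v, v ≠ o → M ≤ depth v →
      ‖ψ (parent v)‖ * Lam n (depth v) / Lam m (depth v) < ε) :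
    ∀ f : ℕ → V → ℂ,
      (∀ k, BddAbove (lipSet o parent depth m (f k))) →
      (∃ B : ℝ, ∀ k, lipNorm o parent depth m (f k) ≤ B) →
      (∀ v, Tendsto (fun k => f k v) atTop (nhds (0 : ℂ))) →
      Tendsto (fun k => lipNorm o parent depth n (fun v => ψ v * f k v)) atTop
        (nhds (0 : ℝ)) := by
  rintro f hf ⟨B, hB⟩ hf0
  exact tendsto_lipNorm_of_tendsto_of_uniform_tail hdepth hlocfin
    (fun v => by simpa using (hf0 v).const_mul (ψ v))
    (fun _ hε => exists_depth_Der_mul_mul_Lam_le hdepth hμ hν hf hB hε)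

/-- If M_ψ : L^(m) → L^(n) is bounded and both characterizing quantities vanish as
|v| → ∞, then M_ψ maps bounded pointwise-null sequences to norm-null sequences. -/
theorem compact_sufficient {V : Type*} (o : V) (parent : V → V) (depth : V → ℕ)
    (hpar : parent o = o) (hdepth0 : depth o = 0)
    (hdepth : ∀ v, v ≠ o → depth v = depth (parent v) + 1)
    (hchild : ∀ v, ∃ w, w ≠ o ∧ parent w = v)
    (hlocfin : ∀ M : ℕ, {v : V | depth v ≤ M}.Finite)
    (ψ : V → ℂ) (m n : ℕ) (hmn : m ≠ n)
    (hbdd : ∃ C : ℝ, ∀ f : V → ℂ, BddAbove (lipSet o parent depth m f) →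
      BddAbove (lipSet o parent depth n (fun v => ψ v * f v)) ∧
      lipNorm o parent depth n (fun v => ψ v * f v) ≤ C * lipNorm o parent depth m f)
    (hμ : ∀ ε > (0 : ℝ), ∃ M : ℕ, ∀ v, v ≠ o → M ≤ depth v →
      ‖Der parent ψ v‖ * ell m (depth v) * Lam n (depth v) < ε)
    (hν : ∀ ε > (0 : ℝ), ∃ M : ℕ, ∀ v, v ≠ o → M ≤ depth v →
      ‖ψ (parent v)‖ * Lam n (depth v) / Lam m (depth v) < ε) :
    ∀ f : ℕ → V → ℂ,
      (∀ k, BddAbove (lipSet o parent depth m (f k))) →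
      (∃ B : ℝ, ∀ k, lipNorm o parent depth m (f k) ≤ B) →
      (∀ v, Tendsto (fun k => f k v) atTop (nhds (0 : ℂ))) →
      Tendsto (fun k => lipNorm o parent depth n (fun v => ψ v * f k v)) atTop
        (nhds (0 : ℝ)) :=
  compact_sufficient_general o parent depth hdepth hlocfin ψ m n hμ hν
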